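/- arXiv:1301.3035 — 2 statements merged into one kernel-verified Lean document; each statement's English description precedes it below -/
import Mathlib

section
/- Fix natural numbers k ≥ 1 and n ≥ 1, and let λ be a multiset of positive integers with sum n and cardinality ℓ ≤ k; for each positive integer j let m_j denote the multiplicity of j in λ. Let U be the set of pairs (d, c) of weakly increasing functions d, c : Fin (k-1) → Fin (n+1) with d i < c i for every i, and for (d, c) ∈ U define the column sizes γ_0,…,γ_{k-1} by γ_j = ĉ (j+1) − ĉ j, where ĉ 0 = 0, ĉ j = c (j-1) for 1 ≤ j ≤ k−1, ĉ k = n. Then (card { (d, c) ∈ U | the multiset of nonzero values among γ_0,…,γ_{k-1} equals λ }) · k · (k − ℓ)! · ∏_j (m_j !) = k! · C(n+k-2, k-1). -/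
/-!
Read the upper path `c` through its column sizes `γ`, a composition of `n` into `k` parts, and
the lower path `d`, which stays below height `n`, through its column sizes `ω`, a composition of
`n - 1`; then `d < c` says that the partial sums of `ω` stay strictly below those of `γ`.
Rotate `γ` and `ω` cyclically by the same amount: the difference of the periodic partial sums
grows by exactly `1` per period, so by the cycle lemma exactly one of the `k` rotations puts `ω`
below `γ`. As the compositions `γ` with big-step multiset `λ` are closed under rotation, `k` times
the number of polyominoes is their number times the number `C(n+k-2, k-1)` of compositions of
`n - 1` into `k` parts. Finally these `γ` are the arrangements of `λ` padded with `k - ℓ` zeros,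
and orbit–stabilizer counts them as `k! / ((k-ℓ)! ∏ m_j!)`.
-/

/-- The extension `ĉ` to `{0,…,k}` of the interior-height sequence
`c : Fin (k-1) → Fin (n+1)` of a bounding path of a parallelogram polyomino of
width `k` and height `n`: `ĉ 0 = 0`, `ĉ j = c (j-1)` for `1 ≤ j ≤ k-1`, `ĉ k = n`. -/
def chat (k n : ℕ) (c : Fin (k - 1) → Fin (n + 1)) (j : ℕ) : ℕ :=
  if h0 : j = 0 then 0
  else if h : j < k then (c ⟨j - 1, by omega⟩ : ℕ)
  else n

namespace Polyomino

open Finset Fin.NatCast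

lemma card_antidiagonalTuple (k n : ℕ) :
    #(Nat.antidiagonalTuple k n) = (k + n - 1).choose n := by
  rw [← Nat.card_eq_finsetCard,
    Nat.card_congr (Equiv.subtypeEquivRight fun _ => Nat.mem_antidiagonalTuple),
    ← Nat.card_congr (Sym.equivNatSumOfFintype (Fin k) n), Nat.card_eq_fintype_card,
    Sym.card_sym_eq_choose, Fintype.card_fin]

section Arrangements

variable {ι α : Type*} [Fintype ι]

lemma map_univ_val_comp_perm (f : ι → α) (σ : Equiv.Perm ι) :
    univ.val.map (f ∘ σ) = univ.val.map f := by
  rw [← Multiset.map_map, Multiset.map_univ_val_equiv]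

lemma card_fiber_eq_count_map_univ [DecidableEq α] (f : ι → α) (a : α) :
    Fintype.card {i // f i = a} = (univ.val.map f).count a := by
  rw [Fintype.card_subtype, Multiset.count_map]
  simp [eq_comm, Finset.card_def]

lemma exists_perm_comp_eq [DecidableEq α] {f g : ι → α}
    (h : univ.val.map g = univ.val.map f) : ∃ σ : Equiv.Perm ι, f ∘ σ = g :=
  ⟨Equiv.ofFiberEquiv fun a => Fintype.equivOfCardEq (by
      rw [card_fiber_eq_count_map_univ, card_fiber_eq_count_map_univ, h]),
    funext (Equiv.ofFiberEquiv_map _)⟩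

section

variable [DecidableEq ι] [DecidableEq α]

def arrangements (f : ι → α) : Finset (ι → α) :=
  univ.image fun σ : Equiv.Perm ι => f ∘ σ

lemma mem_arrangements {f g : ι → α} :
    g ∈ arrangements f ↔ univ.val.map g = univ.val.map f := by
  simp only [arrangements, mem_image, mem_univ, true_and]
  constructor
  · rintro ⟨σ, rfl⟩
    exact map_univ_val_comp_perm f σ
  · exact exists_perm_comp_eq

/-- Orbit–stabilizer for the action of `Equiv.Perm ι` on `ι → α` by precomposition. -/
lemma card_arrangements_mul_prod_factorial (f : ι → α) :
    #(arrangements f) * ∏ a ∈ (univ.val.map f).toFinset, ((univ.val.map f).count a).factorial =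
      (Fintype.card ι).factorial := by
  have hstab : Fintype.card {σ : Equiv.Perm ι // f ∘ σ = f} =
      ∏ a ∈ (univ.val.map f).toFinset, ((univ.val.map f).count a).factorial := by
    rw [DomMulAct.stabilizer_card']
    exact prod_congr rfl fun a _ => by rw [card_fiber_eq_count_map_univ]
  have hfiber : ∀ g ∈ arrangements f,
      #{σ : Equiv.Perm ι | f ∘ σ = g} = Fintype.card {σ : Equiv.Perm ι // f ∘ σ = f} := by
    intro g hg
    obtain ⟨τ, -, rfl⟩ := mem_image.1 hg
    rw [Fintype.card_subtype]
    refine card_nbij' (· * τ⁻¹) (· * τ) ?_ ?_ ?_ ?_ <;> intro σ hσ <;>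
      simp_all [funext_iff]
  calc #(arrangements f) * _ = ∑ g ∈ arrangements f, #{σ : Equiv.Perm ι | f ∘ σ = g} := by
        rw [sum_congr rfl hfiber, sum_const, smul_eq_mul, hstab]
    _ = #(univ : Finset (Equiv.Perm ι)) := (card_eq_sum_card_image _ _).symm
    _ = (Fintype.card ι).factorial := Fintype.card_perm

end

lemma exists_map_univ_val_eq (μ : Multiset α) {k : ℕ} (hk : Multiset.card μ = k) :
    ∃ f : Fin k → α, univ.val.map f = μ := by
  subst hk
  induction μ using Quot.ind with
  | mk l =>
    exact ⟨fun i => l.get i, by rw [Fin.univ_val_map]; exact congrArg _ (List.ofFn_get l)⟩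

end Arrangements

lemma filter_ne_zero_eq_iff {m l : Multiset ℕ} (hl : 0 ∉ l) :
    m.filter (· ≠ 0) = l ↔
      m = l + Multiset.replicate (Multiset.card m - Multiset.card l) 0 := by
  constructor
  · rintro rfl
    have hsplit := Multiset.filter_add_not (· ≠ 0) m
    simp only [not_not, Multiset.filter_eq'] at hsplit
    have hcard := congrArg Multiset.card hsplit
    rw [Multiset.card_add, Multiset.card_replicate] at hcard
    conv_lhs => rw [← hsplit]
    congr 2
    omega
  · intro h
    rw [h, Multiset.filter_add, Multiset.filter_eq_self.2 fun a ha => ne_of_mem_of_not_mem ha hl,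
      Multiset.filter_eq_nil.2 fun a ha => by simp [Multiset.eq_of_mem_replicate ha],
      add_zero]

lemma prod_factorial_count_add_replicate_zero {l : Multiset ℕ} (hl : 0 ∉ l) (r : ℕ) :
    ∏ a ∈ (l + Multiset.replicate r 0).toFinset,
        ((l + Multiset.replicate r 0).count a).factorial =
      r.factorial * ∏ a ∈ l.toFinset, (l.count a).factorial := by
  have hl' : (0 : ℕ) ∉ l.toFinset := by simpa using hl
  have hsub : (l + Multiset.replicate r 0).toFinset ⊆ insert 0 l.toFinset := by
    intro a ha
    rw [Multiset.mem_toFinset, Multiset.mem_add] at ha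
    rw [mem_insert, Multiset.mem_toFinset]
    exact ha.symm.imp_left Multiset.eq_of_mem_replicate
  rw [prod_subset hsub fun a _ ha => by
      rw [Multiset.count_eq_zero_of_notMem fun h => ha (Multiset.mem_toFinset.2 h),
        Nat.factorial_zero],
    prod_insert hl']
  simp only [Multiset.count_add, Multiset.count_eq_zero_of_notMem hl,
    Multiset.count_replicate_self, zero_add]
  congr 1
  refine prod_congr rfl fun a ha => ?_
  rw [Multiset.count_replicate, if_neg fun h : 0 = a => hl' (h ▸ ha), add_zero]

lemma map_range_val_eq_map_univ_val {α : Type*} (k : ℕ) (g : ℕ → α) :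
    (range k).val.map g = univ.val.map fun j : Fin k => g j := by
  rw [← Nat.Iio_eq_range, ← Fin.map_valEmbedding_univ, map_val, Multiset.map_map]
  rfl

section Cyclic

variable {k : ℕ} [NeZero k]

/-- The cast `ℕ → Fin k` reduces mod `k`: these are the partial sums of the `k`-periodic
extension of `γ`, defined for all `j`. -/
def partialSum (γ : Fin k → ℕ) (j : ℕ) : ℕ := ∑ t ∈ range j, γ (t : Fin k)

def rotate (s : Fin k) (γ : Fin k → ℕ) : Fin k → ℕ := fun i => γ (i + s)

lemma partialSum_mono (γ : Fin k → ℕ) : Monotone (partialSum γ) :=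
  fun _ _ h => sum_le_sum_of_subset (range_subset_range.2 h)

lemma partialSum_self (γ : Fin k → ℕ) : partialSum γ k = ∑ i, γ i := by
  rw [partialSum, ← Fin.sum_univ_eq_sum_range]
  simp

lemma partialSum_succ (γ : Fin k → ℕ) (j : ℕ) :
    partialSum γ (j + 1) = partialSum γ j + γ j :=
  sum_range_succ _ _

lemma partialSum_le_sum (γ : Fin k → ℕ) {j : ℕ} (hj : j ≤ k) :
    partialSum γ j ≤ ∑ i, γ i :=
  partialSum_self γ ▸ partialSum_mono γ hj

lemma partialSum_add_rotate (γ : Fin k → ℕ) (s : Fin k) (i : ℕ) :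
    partialSum γ s + partialSum (rotate s γ) i = partialSum γ (s + i) := by
  rw [partialSum, partialSum, partialSum, sum_range_add]
  congr 1
  refine sum_congr rfl fun t _ => ?_
  simp [rotate, add_comm]

lemma sum_rotate (s : Fin k) (γ : Fin k → ℕ) : ∑ i, rotate s γ i = ∑ i, γ i :=
  Equiv.sum_comp (Equiv.addRight s) γ

lemma partialSum_add_period (γ : Fin k → ℕ) (j : ℕ) :
    partialSum γ (j + k) = partialSum γ j + ∑ i, γ i := by
  rw [partialSum, partialSum, sum_range_add,
    ← Fin.sum_univ_eq_sum_range (fun t => γ ((j + t : ℕ) : Fin k))]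
  congr 1
  simpa using Equiv.sum_comp (Equiv.addLeft (j : Fin k)) γ

lemma rotate_neg_rotate (s : Fin k) (γ : Fin k → ℕ) : rotate (-s) (rotate s γ) = γ := by
  funext i; simp [rotate]

lemma rotate_rotate_neg (s : Fin k) (γ : Fin k → ℕ) : rotate s (rotate (-s) γ) = γ := by
  funext i; simp [rotate]

lemma existsUnique_forall_lt_of_add_period (T : ℕ → ℤ)
    (hT : ∀ j, T (j + k) = T j + 1) : ∃! s : Fin k, ∀ i ∈ Icc 1 k, T s < T (s + i) := by
  have not_both : ∀ a b : Fin k, a < b → (∀ i ∈ Icc 1 k, T a < T (a + i)) →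
      ¬ ∀ i ∈ Icc 1 k, T b < T (b + i) := by
    intro a b hab ha hb
    have h1 := ha (b - a) (mem_Icc.2 (by omega))
    have h2 := hb (a + k - b) (mem_Icc.2 (by omega))
    rw [Nat.add_sub_cancel' hab.le] at h1
    rw [show (b : ℕ) + (a + k - b) = a + k by omega, hT] at h2
    omega
  -- the last position at which `T` attains its minimum over one period
  obtain ⟨s, -, hs⟩ := exists_min_image univ (fun j : Fin k => toLex (T j, -(j : ℤ)))
    univ_nonempty
  simp only [mem_univ, Prod.Lex.le_iff, ofLex_toLex, forall_const] at hs
  have hvalid : ∀ i ∈ Icc 1 k, T s < T (s + i) := by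
    intro i hi
    rw [mem_Icc] at hi
    rcases lt_or_ge ((s : ℕ) + i) k with h | h
    · have := hs ⟨s + i, h⟩
      push_cast at this
      omega
    · have := hs ⟨s + i - k, by omega⟩
      have hp := hT (s + i - k)
      rw [Nat.sub_add_cancel h] at hp
      push_cast [Nat.cast_sub h] at this
      omega
  refine ⟨s, hvalid, fun t ht => ?_⟩
  rcases lt_trichotomy t s with h | h | h
  · exact absurd hvalid (not_both t s h ht)
  · exact h
  · exact absurd ht (not_both s t h hvalid)

def StrictlyBelow (ω γ : Fin k → ℕ) : Prop :=
  ∀ i ∈ Icc 1 k, partialSum ω i < partialSum γ i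

instance (ω γ : Fin k → ℕ) : Decidable (StrictlyBelow ω γ) :=
  inferInstanceAs (Decidable (∀ i ∈ Icc 1 k, _))

lemma existsUnique_strictlyBelow_rotate {ω γ : Fin k → ℕ}
    (h : ∑ i, γ i = ∑ i, ω i + 1) :
    ∃! s : Fin k, StrictlyBelow (rotate s ω) (rotate s γ) := by
  have hT : ∀ j, ((partialSum γ (j + k) : ℤ) - partialSum ω (j + k)) =
      ((partialSum γ j : ℤ) - partialSum ω j) + 1 := by
    intro j
    rw [partialSum_add_period, partialSum_add_period]
    omega
  refine (existsUnique_congr fun s => forall₂_congr fun i _ => ?_).1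
    (existsUnique_forall_lt_of_add_period (fun j => (partialSum γ j : ℤ) - partialSum ω j) hT)
  have hγ := partialSum_add_rotate γ s i
  have hω := partialSum_add_rotate ω s i
  omega

def compositionsBelow (γ : Fin k → ℕ) (N : ℕ) : Finset (Fin k → ℕ) :=
  {ω ∈ Nat.antidiagonalTuple k N | StrictlyBelow ω γ}

lemma sum_card_compositionsBelow_rotate {γ : Fin k → ℕ} {N : ℕ} (hγ : ∑ i, γ i = N + 1) :
    ∑ s, #(compositionsBelow (rotate s γ) N) = #(Nat.antidiagonalTuple k N) := by
  calc ∑ s, #(compositionsBelow (rotate s γ) N)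
      = ∑ s, #{ω ∈ Nat.antidiagonalTuple k N | StrictlyBelow (rotate s ω) (rotate s γ)} := by
        refine sum_congr rfl fun s _ => card_nbij' (rotate (-s)) (rotate s) ?_ ?_ ?_ ?_
        · intro ω hω
          simp_all [compositionsBelow, Nat.mem_antidiagonalTuple, sum_rotate, rotate_rotate_neg]
        · intro ω hω
          simp_all [compositionsBelow, Nat.mem_antidiagonalTuple, sum_rotate]
        · exact fun ω _ => rotate_rotate_neg s ω
        · exact fun ω _ => rotate_neg_rotate s ω
    _ = ∑ ω ∈ Nat.antidiagonalTuple k N, #{s | StrictlyBelow (rotate s ω) (rotate s γ)} := by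
        simp only [card_filter]
        exact sum_comm
    _ = ∑ ω ∈ Nat.antidiagonalTuple k N, 1 := by
        refine sum_congr rfl fun ω hω => ?_
        rw [Nat.mem_antidiagonalTuple] at hω
        obtain ⟨s₀, hs₀, huniq⟩ :=
          existsUnique_strictlyBelow_rotate (ω := ω) (hγ.trans (by rw [hω]))
        refine card_eq_one.2 ⟨s₀, ext fun s => ?_⟩
        simp only [mem_filter, mem_univ, true_and, mem_singleton]
        exact ⟨huniq s, fun h => h ▸ hs₀⟩
    _ = #(Nat.antidiagonalTuple k N) := (card_eq_sum_ones _).symm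

lemma sum_card_compositionsBelow_mul {G : Finset (Fin k → ℕ)} {N : ℕ}
    (hG : ∀ s, ∀ γ ∈ G, rotate s γ ∈ G) (hsum : ∀ γ ∈ G, ∑ i, γ i = N + 1) :
    (∑ γ ∈ G, #(compositionsBelow γ N)) * k = #G * #(Nat.antidiagonalTuple k N) := by
  calc (∑ γ ∈ G, #(compositionsBelow γ N)) * k
      = ∑ s : Fin k, ∑ γ ∈ G, #(compositionsBelow γ N) := by simp [mul_comm]
    _ = ∑ s : Fin k, ∑ γ ∈ G, #(compositionsBelow (rotate s γ) N) :=
        sum_congr rfl fun s _ => sum_nbij' (rotate (-s)) (rotate s) (fun γ hγ => hG _ γ hγ)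
          (fun γ hγ => hG s γ hγ) (fun γ _ => rotate_rotate_neg s γ)
          (fun γ _ => rotate_neg_rotate s γ) (fun γ _ => by rw [rotate_rotate_neg])
    _ = ∑ γ ∈ G, ∑ s, #(compositionsBelow (rotate s γ) N) := sum_comm
    _ = #G * #(Nat.antidiagonalTuple k N) := by
        rw [sum_congr rfl fun γ hγ => sum_card_compositionsBelow_rotate (hsum γ hγ), sum_const,
          smul_eq_mul]

end Cyclic

section Paths

variable {K : ℕ}

def heights (M : ℕ) (c : Fin K → ℕ) (j : ℕ) : ℕ :=
  if h0 : j = 0 then 0 else if h : j < K + 1 then c ⟨j - 1, by omega⟩ else M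

lemma chat_eq_heights (n : ℕ) (c : Fin K → Fin (n + 1)) :
    chat (K + 1) n c = heights n (fun i => c i) := rfl

def colSizes (M : ℕ) (c : Fin K → ℕ) : Fin (K + 1) → ℕ :=
  fun j => heights M c (j + 1) - heights M c j

variable {M : ℕ} {c : Fin K → ℕ}

lemma heights_mono (hc : Monotone c) (hM : ∀ i, c i ≤ M) : Monotone (heights M c) := by
  refine monotone_nat_of_le_succ fun j => ?_
  unfold heights
  split_ifs <;>
    first | contradiction | omega | exact hc (Fin.mk_le_mk.2 (by omega)) | exact hM _

lemma partialSum_colSizes (hc : Monotone c) (hM : ∀ i, c i ≤ M) {j : ℕ} (hj : j ≤ K + 1) :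
    partialSum (colSizes M c) j = heights M c j := by
  rw [show heights M c j = heights M c j - heights M c 0 by simp [heights], partialSum,
    ← sum_range_tsub (heights_mono hc hM)]
  refine sum_congr rfl fun t ht => ?_
  rw [colSizes, Fin.val_natCast, Nat.mod_eq_of_lt (by simp at ht; omega)]

lemma sum_colSizes (hc : Monotone c) (hM : ∀ i, c i ≤ M) : ∑ i, colSizes M c i = M := by
  rw [← partialSum_self, partialSum_colSizes hc hM le_rfl]
  simp [heights]

lemma partialSum_colSizes_succ (hc : Monotone c) (hM : ∀ i, c i ≤ M) (i : Fin K) :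
    partialSum (colSizes M c) (i + 1) = c i := by
  rw [partialSum_colSizes hc hM (by omega)]
  simp [heights]

lemma heights_partialSum {γ : Fin (K + 1) → ℕ} (hγ : ∑ i, γ i = M) {j : ℕ}
    (hj : j ≤ K + 1) :
    heights M (fun i : Fin K => partialSum γ (i + 1)) j = partialSum γ j := by
  unfold heights
  split_ifs with h0 h
  · simp [h0, partialSum]
  · dsimp only
    congr 1
    omega
  · rw [show j = K + 1 by omega, partialSum_self, hγ]

lemma colSizes_partialSum {γ : Fin (K + 1) → ℕ} (hγ : ∑ i, γ i = M) :
    colSizes M (fun i : Fin K => partialSum γ (i + 1)) = γ := by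
  funext j
  rw [colSizes, heights_partialSum hγ (by omega), heights_partialSum hγ (by omega),
    partialSum_succ, Nat.add_sub_cancel_left, Fin.cast_val_eq_self]

def pathOf (B : ℕ) (γ : Fin (K + 1) → ℕ) : Fin K → Fin (B + 1) :=
  fun i => (partialSum γ (i + 1) : Fin (B + 1))

variable {B : ℕ} {γ : Fin (K + 1) → ℕ}

lemma val_pathOf (hγ : ∑ i, γ i ≤ B) (i : Fin K) :
    (pathOf B γ i : ℕ) = partialSum γ (i + 1) := by
  rw [pathOf, Fin.val_natCast, Nat.mod_eq_of_lt]
  exact (partialSum_le_sum γ (by omega)).trans_lt (by omega)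

lemma pathOf_mono (hγ : ∑ i, γ i ≤ B) : Monotone (pathOf B γ) := fun i j h => by
  rw [Fin.le_iff_val_le_val, val_pathOf hγ, val_pathOf hγ]
  exact partialSum_mono γ (by simpa using h)

lemma colSizes_pathOf (hγ : ∑ i, γ i = M) (hMB : M ≤ B) :
    colSizes M (fun i => pathOf B γ i) = γ := by
  simp_rw [val_pathOf (hγ ▸ hMB)]
  exact colSizes_partialSum hγ

lemma pathOf_colSizes {c : Fin K → Fin (B + 1)} (hc : Monotone c) (hM : ∀ i, (c i : ℕ) ≤ M)
    (hMB : M ≤ B) : pathOf B (colSizes M (fun i => c i)) = c := by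
  have hc' : Monotone fun i => (c i : ℕ) := fun _ _ h => hc h
  funext i
  rw [Fin.ext_iff, val_pathOf (by rw [sum_colSizes hc' hM]; exact hMB),
    partialSum_colSizes_succ hc' hM]

lemma strictlyBelow_colSizes {N : ℕ} {d c : Fin K → ℕ} (hd : Monotone d) (hc : Monotone c)
    (hdN : ∀ i, d i ≤ N) (hcN : ∀ i, c i ≤ N + 1) (hdc : ∀ i, d i < c i) :
    StrictlyBelow (colSizes N d) (colSizes (N + 1) c) := by
  intro i hi
  rw [mem_Icc] at hi
  rw [partialSum_colSizes hd hdN hi.2, partialSum_colSizes hc hcN hi.2]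
  unfold heights
  split_ifs
  · omega
  · exact hdc _
  · omega

/-- The lower path `d` stays strictly below `c ≤ n`, so it is read as a composition of `n - 1`. -/
lemma card_pairs_eq_sum_card_compositionsBelow (N : ℕ) (S : Finset (Fin (K + 1) → ℕ))
    (hS : ∀ γ ∈ S, ∑ i, γ i = N + 1) :
    #{p : (Fin K → Fin (N + 2)) × (Fin K → Fin (N + 2)) |
        (Monotone p.1 ∧ Monotone p.2 ∧ ∀ i, p.1 i < p.2 i) ∧
          colSizes (N + 1) (fun i => p.2 i) ∈ S} =
      ∑ γ ∈ S, #(compositionsBelow γ N) := by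
  rw [← card_sigma]
  refine card_bij' (fun p _ => ⟨colSizes (N + 1) (fun i => p.2 i), colSizes N (fun i => p.1 i)⟩)
    (fun q _ => (pathOf (N + 1) q.2, pathOf (N + 1) q.1)) ?_ ?_ ?_ ?_
  · rintro ⟨d, c⟩ hp
    simp only [mem_filter, mem_univ, true_and] at hp
    obtain ⟨⟨hd, hc, hdc⟩, hcS⟩ := hp
    have hc' : Monotone fun i => (c i : ℕ) := fun _ _ h => hc h
    have hd' : Monotone fun i => (d i : ℕ) := fun _ _ h => hd h
    have hcM : ∀ i, (c i : ℕ) ≤ N + 1 := fun i => Fin.is_le _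
    have hdN : ∀ i, (d i : ℕ) ≤ N := fun i => by have := hcM i; have := hdc i; omega
    exact mem_sigma.2 ⟨hcS, mem_filter.2 ⟨Nat.mem_antidiagonalTuple.2 (sum_colSizes hd' hdN),
      strictlyBelow_colSizes hd' hc' hdN hcM hdc⟩⟩
  · rintro ⟨γ, ω⟩ hq
    obtain ⟨hγS, hω⟩ := mem_sigma.1 hq
    simp only [compositionsBelow, mem_filter, Nat.mem_antidiagonalTuple] at hγS hω
    have hγ := hS γ hγS
    simp only [mem_filter, mem_univ, true_and]
    refine ⟨⟨pathOf_mono (by omega), pathOf_mono hγ.le, fun i => ?_⟩, by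
      rwa [colSizes_pathOf hγ le_rfl]⟩
    rw [Fin.lt_def, val_pathOf (by omega), val_pathOf hγ.le]
    exact hω.2 (i + 1) (mem_Icc.2 ⟨by omega, by omega⟩)
  · rintro ⟨d, c⟩ hp
    simp only [mem_filter, mem_univ, true_and] at hp
    obtain ⟨⟨hd, hc, hdc⟩, -⟩ := hp
    have hdN : ∀ i, (d i : ℕ) ≤ N := fun i => by have := (c i).is_le; have := hdc i; omega
    exact Prod.ext (pathOf_colSizes hd hdN (by omega))
      (pathOf_colSizes hc (fun i => (c i).is_le) le_rfl)
  · rintro ⟨γ, ω⟩ hq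
    obtain ⟨hγS, hω⟩ := mem_sigma.1 hq
    simp only [compositionsBelow, mem_filter, Nat.mem_antidiagonalTuple] at hγS hω
    exact Sigma.ext (colSizes_pathOf (hS γ hγS) le_rfl)
      (heq_of_eq (colSizes_pathOf hω.1 (by omega)))

end Paths

theorem card_polyominoes_mul (K N : ℕ) (lam : Multiset ℕ) (hpos : ∀ x ∈ lam, 0 < x)
    (hsum : lam.sum = N + 1) (hlen : Multiset.card lam ≤ K + 1) :
    #{p : (Fin K → Fin (N + 2)) × (Fin K → Fin (N + 2)) |
        (Monotone p.1 ∧ Monotone p.2 ∧ ∀ i, p.1 i < p.2 i) ∧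
        (((range (K + 1)).val.map fun j => chat (K + 1) (N + 1) p.2 (j + 1) -
          chat (K + 1) (N + 1) p.2 j).filter fun x => x ≠ 0) = lam} * (K + 1) *
        (K + 1 - Multiset.card lam).factorial * ∏ j ∈ lam.toFinset, (lam.count j).factorial =
      (K + 1).factorial * (N + K).choose K := by
  have hlam0 : 0 ∉ lam := fun h => (hpos 0 h).false
  set μ := lam + Multiset.replicate (K + 1 - Multiset.card lam) 0
  obtain ⟨f, hf⟩ := exists_map_univ_val_eq μ (k := K + 1) (by simp [μ]; omega)
  have hG : ∀ γ, γ ∈ arrangements f ↔ univ.val.map γ = μ := fun γ => by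
    rw [mem_arrangements, hf]
  have hGsum : ∀ γ ∈ arrangements f, ∑ i, γ i = N + 1 := fun γ hγ => by
    rw [sum_eq_multiset_sum, (hG γ).1 hγ]
    simp [μ, hsum]
  have hcard : #{p : (Fin K → Fin (N + 2)) × (Fin K → Fin (N + 2)) |
        (Monotone p.1 ∧ Monotone p.2 ∧ ∀ i, p.1 i < p.2 i) ∧
        (((range (K + 1)).val.map fun j => chat (K + 1) (N + 1) p.2 (j + 1) -
          chat (K + 1) (N + 1) p.2 j).filter fun x => x ≠ 0) = lam} =
      ∑ γ ∈ arrangements f, #(compositionsBelow γ N) := by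
    rw [← card_pairs_eq_sum_card_compositionsBelow N _ hGsum]
    congr 1
    refine filter_congr fun p _ => and_congr_right fun _ => ?_
    rw [chat_eq_heights, map_range_val_eq_map_univ_val, filter_ne_zero_eq_iff hlam0, hG]
    simp [colSizes, μ]
  have hrot := sum_card_compositionsBelow_mul (N := N)
    (fun s γ hγ => (hG _).2 (by
      rw [← (hG γ).1 hγ]
      exact map_univ_val_comp_perm γ (Equiv.addRight s)))
    hGsum
  have harr := card_arrangements_mul_prod_factorial f
  rw [hf, prod_factorial_count_add_replicate_zero hlam0, Fintype.card_fin] at harr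
  rw [card_antidiagonalTuple, show K + 1 + N - 1 = N + K by omega, Nat.choose_symm_add] at hrot
  rw [hcard, hrot, ← harr]
  ring

end Polyomino

/-- The number of parallelogram polyominoes of width `k` and height `n` whose
multiset of big-step sizes (the nonzero column sizes `γ_j = ĉ(j+1) − ĉ(j)` of the
upper path) equals a given multiset `lam` of positive integers summing to `n`
with at most `k` parts, satisfies
`card · k · (k−ℓ)! · ∏_j m_j! = k! · C(n+k-2, k-1)`. -/
theorem stmt6 (k n : ℕ) (hk : 1 ≤ k) (hn : 1 ≤ n) (lam : Multiset ℕ)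
    (hpos : ∀ x ∈ lam, 0 < x) (hsum : lam.sum = n) (hlen : Multiset.card lam ≤ k) :
    Nat.card {p : (Fin (k - 1) → Fin (n + 1)) × (Fin (k - 1) → Fin (n + 1)) //
        (Monotone p.1 ∧ Monotone p.2 ∧ ∀ i, p.1 i < p.2 i) ∧
        (((Finset.range k).val.map fun j => chat k n p.2 (j + 1) - chat k n p.2 j).filter
            fun x => x ≠ 0) = lam} * k * Nat.factorial (k - Multiset.card lam) *
        ∏ j ∈ lam.toFinset, Nat.factorial (lam.count j) =
      Nat.factorial k * Nat.choose (n + k - 2) (k - 1) := by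
  obtain ⟨K, rfl⟩ : ∃ K, k = K + 1 := ⟨k - 1, by omega⟩
  obtain ⟨N, rfl⟩ : ∃ N, n = N + 1 := ⟨n - 1, by omega⟩
  rw [Nat.card_eq_fintype_card, Fintype.card_subtype, show N + 1 + (K + 1) - 2 = N + K by omega]
  exact Polyomino.card_polyominoes_mul K N lam hpos hsum hlen
end

section
/- Fix natural numbers n ≥ 1 and k ≥ 0, and let σ be a permutation of Fin n. In the polynomial ring ℤ[X], the sum over all functions f : Fin n → Fin (k+1) satisfying f ∘ σ = f of X^(Σ_{m} (f m : ℕ)) equals the product, over all orbits O of the cyclic subgroup generated by σ acting on Fin n, of Σ_{j=0}^{k} X^(j · |O|). -/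
/-!
A `σ`-invariant `f : Fin n → Fin (k + 1)` is the same thing as a function `g` on the orbits of
`⟨σ⟩`, and its area `Σ_m f m` is `Σ_O |O| · g O`. Hence the area generating function of invariant
functions is a sum over all functions on the orbits of a product of independent factors
`X ^ (|O| · g O)`, which factors as the product over `O` of `Σ_j X ^ (j · |O|)`.
-/

open Finset MulAction Equiv

section

variable {α β : Type*}

theorem Equiv.Perm.comp_zpow_eq_self {f : α → β} {σ : Perm α} (h : f ∘ σ = f) (z : ℤ) :
    f ∘ ⇑(σ ^ z) = f := by
  have hσ : DomMulAct.mk σ ∈ stabilizer (Perm α)ᵈᵐᵃ f := DomMulAct.mem_stabilizer_iff.2 h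
  have := zpow_mem hσ z
  rwa [DomMulAct.mem_stabilizer_iff, DomMulAct.symm_mk_zpow, Equiv.symm_apply_apply] at this

theorem orbitRel_zpowers_le_ker_iff {f : α → β} {σ : Perm α} :
    orbitRel (Subgroup.zpowers σ) α ≤ Setoid.ker f ↔ f ∘ σ = f := by
  refine ⟨fun h => funext fun x => h ⟨⟨σ, Subgroup.mem_zpowers σ⟩, rfl⟩, ?_⟩
  rintro h _ x ⟨⟨_, z, rfl⟩, rfl⟩
  exact congrFun (Perm.comp_zpow_eq_self h z) x

theorem sum_filter_comp_eq_self_eq_sum_quotient {M : Type*} [AddCommMonoid M] [Fintype α]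
    [DecidableEq α] [Fintype β] [DecidableEq β] (σ : Perm α)
    [Fintype (orbitRel.Quotient (Subgroup.zpowers σ) α → β)] (F : (α → β) → M) :
    ∑ f ∈ univ.filter (fun f : α → β => f ∘ σ = f), F f =
      ∑ g : orbitRel.Quotient (Subgroup.zpowers σ) α → β, F (g ∘ Quotient.mk'') := by
  rw [sum_subtype (p := fun f : α → β => f ∘ σ = f) _ fun f => mem_filter_univ f]
  exact Fintype.sum_equiv ((subtypeEquivRight fun _ => orbitRel_zpowers_le_ker_iff.symm).trans
    (Setoid.liftEquiv _)) _ _ fun _ => rfl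

theorem sum_comp_orbitRel_mk {G M : Type*} [Group G] [MulAction G α] [Fintype α]
    [AddCommMonoid M] [Fintype (orbitRel.Quotient G α)] (w : orbitRel.Quotient G α → M) :
    ∑ x : α, w (Quotient.mk'' x) = ∑ O, Nat.card O.orbit • w O := by
  classical
  rw [← Fintype.sum_equiv (selfEquivSigmaOrbits' G α).symm _ _ fun _ => rfl, Fintype.sum_sigma]
  refine Fintype.sum_congr _ _ fun O => ?_
  rw [Nat.card_eq_fintype_card, ← Finset.card_univ, ← sum_const]
  exact Fintype.sum_congr _ _ fun x => congrArg w (orbitRel.Quotient.mem_orbit.1 x.2)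

end

open scoped Classical in
theorem stmt10_general (n k : ℕ) (σ : Equiv.Perm (Fin n)) :
    ∑ f ∈ Finset.univ.filter (fun f : Fin n → Fin (k + 1) => f ∘ σ = f),
        (Polynomial.X : Polynomial ℤ) ^ (∑ m, (f m : ℕ)) =
      ∏ᶠ O : MulAction.orbitRel.Quotient (Subgroup.zpowers σ) (Fin n),
        ∑ j ∈ Finset.range (k + 1),
          (Polynomial.X : Polynomial ℤ) ^ (j * Nat.card O.orbit) := by
  rw [finprod_eq_prod_of_fintype]
  simp_rw [← Fin.sum_univ_eq_sum_range]
  rw [Fintype.prod_sum, sum_filter_comp_eq_self_eq_sum_quotient]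
  refine Fintype.sum_congr _ _ fun g => ?_
  rw [prod_pow_eq_pow_sum, Function.comp_def, sum_comp_orbitRel_mk fun O => (g O : ℕ)]
  simp_rw [smul_eq_mul, mul_comm]

open scoped Classical in
/-- Character-value, area-weighted form of the Frobenius formula for labelled
north-east lattice paths from `(0,0)` to `(k,n)`: the sum over functions
`f : Fin n → Fin (k+1)` fixed by `σ` (i.e. `f ∘ σ = f`) of `X^(Σ_m f m)` equals
the product over the orbits `O` of `⟨σ⟩` on `Fin n` of `Σ_{j=0}^k X^(j·|O|)`. -/
theorem stmt10 (n k : ℕ) (hn : 1 ≤ n) (σ : Equiv.Perm (Fin n)) :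
    ∑ f ∈ Finset.univ.filter (fun f : Fin n → Fin (k + 1) => f ∘ σ = f),
        (Polynomial.X : Polynomial ℤ) ^ (∑ m, (f m : ℕ)) =
      ∏ᶠ O : MulAction.orbitRel.Quotient (Subgroup.zpowers σ) (Fin n),
        ∑ j ∈ Finset.range (k + 1),
          (Polynomial.X : Polynomial ℤ) ^ (j * Nat.card O.orbit) :=
  stmt10_general n k σ
end
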